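/- Let G be a simple graph on a finite vertex set V, and let G* be the simple graph on V × {0,1,2} with adjacency: (u,i) adjacent to (v,j) iff either (u = v and {i,j} = {0,1}) or (G.Adj u v and {i,j} = {1,2}). For a set S of vertices of a simple graph H, define spread(H, S) = S ∪ { w : ∃ z ∈ S, H.Adj w z }. Then for every C ⊆ V: spread(G*, (V × {0}) ∪ ((V ∖ C) × {1})) = (V × {0}) ∪ (V × {1}) ∪ (D × {2}), where D = { v ∈ V : ∃ u, G.Adj u v and u ∉ C }; moreover, if C is a vertex cover of G, then D ⊆ C, so the cardinality of this spread set is at most 2·|V| + |C|. -/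

import Mathlib

/-- The graph `G*` from the NP-hardness reduction: vertices are `V × {0,1,2}`;
`(u,i)` is adjacent to `(v,j)` iff either `u = v` and `{i,j} = {0,1}`, or
`G.Adj u v` and `{i,j} = {1,2}`. -/
def Gstar {V : Type*} (G : SimpleGraph V) : SimpleGraph (V × Fin 3) where
  Adj a b :=
    (a.1 = b.1 ∧ ((a.2 = 0 ∧ b.2 = 1) ∨ (a.2 = 1 ∧ b.2 = 0)))
    ∨ (G.Adj a.1 b.1 ∧ ((a.2 = 1 ∧ b.2 = 2) ∨ (a.2 = 2 ∧ b.2 = 1)))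
  symm := by
    constructor
    rintro a b (⟨h1, h2 | h2⟩ | ⟨h1, h2 | h2⟩)
    · exact Or.inl ⟨h1.symm, Or.inr ⟨h2.2, h2.1⟩⟩
    · exact Or.inl ⟨h1.symm, Or.inl ⟨h2.2, h2.1⟩⟩
    · exact Or.inr ⟨h1.symm, Or.inr ⟨h2.2, h2.1⟩⟩
    · exact Or.inr ⟨h1.symm, Or.inl ⟨h2.2, h2.1⟩⟩
  loopless := by
    constructor
    rintro a (⟨h1, ⟨h2, h3⟩ | ⟨h2, h3⟩⟩ | ⟨h1, ⟨h2, h3⟩ | ⟨h2, h3⟩⟩)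
    · rw [h2] at h3; exact absurd h3 (by decide)
    · rw [h2] at h3; exact absurd h3 (by decide)
    · exact G.loopless.irrefl a.1 h1
    · exact G.loopless.irrefl a.1 h1

/-- One step of deterministic SIS spread (α = 1, c = 0): the infected set together with
all neighbors of infected nodes. -/
def spread {W : Type*} (H : SimpleGraph W) (S : Set W) : Set W :=
  S ∪ {w | ∃ z ∈ S, H.Adj w z}


/-! Every vertex `v₁` is infected already or has the infected neighbour `v₀`, while `v₂` is
infected exactly when some neighbour `u₁` is, i.e. `G.Adj u v` with `u ∉ C`. If `C` is a vertex
cover, no edge joins two vertices outside `C`, so such `v` lie in `C`. -/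

open Set

lemma Set.ncard_prod_singleton {α β : Type*} (s : Set α) (b : β) :
    (s ×ˢ ({b} : Set β)).ncard = s.ncard := by
  rw [prod_singleton, ncard_image_of_injective _ fun _ _ h => (Prod.mk.inj h).1]

namespace Gstar

variable {V : Type*} (G : SimpleGraph V)

@[simp]
lemma adj_zero {v u : V} {i : Fin 3} : (Gstar G).Adj (v, i) (u, 0) ↔ v = u ∧ i = 1 := by
  fin_cases i <;> simp [Gstar]

@[simp]
lemma adj_one {v u : V} {i : Fin 3} :
    (Gstar G).Adj (v, i) (u, 1) ↔ (v = u ∧ i = 0) ∨ (G.Adj v u ∧ i = 2) := by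
  fin_cases i <;> simp [Gstar]

def neighborsOfCompl (C : Set V) : Set V := {v | ∃ u, G.Adj u v ∧ u ∉ C}

lemma spread_screened (C : Set V) :
    spread (Gstar G) (univ ×ˢ {0} ∪ Cᶜ ×ˢ {1}) =
      univ ×ˢ {0} ∪ univ ×ˢ {1} ∪ neighborsOfCompl G C ×ˢ {2} := by
  ext ⟨v, i⟩
  fin_cases i <;> simp [spread, neighborsOfCompl, G.adj_comm, and_comm]

variable {G}

lemma neighborsOfCompl_subset {C : Set V} (hC : G.IsVertexCover C) :
    neighborsOfCompl G C ⊆ C :=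
  fun _ ⟨_, huv, hu⟩ => (hC huv).resolve_left hu

lemma ncard_spread_screened_le [Fintype V] {C : Set V} (hC : G.IsVertexCover C) :
    (spread (Gstar G) (univ ×ˢ {0} ∪ Cᶜ ×ˢ {1})).ncard ≤ 2 * Fintype.card V + C.ncard := by
  rw [spread_screened]
  calc (univ ×ˢ {0} ∪ univ ×ˢ {1} ∪ neighborsOfCompl G C ×ˢ {(2 : Fin 3)}).ncard
      ≤ (univ ×ˢ {0} : Set (V × Fin 3)).ncard + (univ ×ˢ {1} : Set (V × Fin 3)).ncard
          + (neighborsOfCompl G C ×ˢ {(2 : Fin 3)}).ncard :=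
        (ncard_union_le _ _).trans (Nat.add_le_add_right (ncard_union_le _ _) _)
    _ ≤ 2 * Fintype.card V + C.ncard := by
        simp only [ncard_prod_singleton, ncard_univ, Nat.card_eq_fintype_card]
        linarith [ncard_le_ncard (neighborsOfCompl_subset hC) C.toFinite]

end Gstar

/-- starting from infected set `(V × {0}) ∪ ((V ∖ C) × {1})` (the state at
time 1 after screening the `V₁`-copies of `C`), one step of deterministic spread in `G*`
yields exactly `(V × {0}) ∪ (V × {1}) ∪ (D × {2})` where
`D = {v | ∃ u, G.Adj u v ∧ u ∉ C}`; moreover if `C` is a vertex cover of `G` then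
`D ⊆ C`, so this spread set has cardinality at most `2·|V| + |C|`. -/
theorem spread_after_screening_cover
    {V : Type*} [Fintype V] (G : SimpleGraph V) (C : Set V) :
    (spread (Gstar G)
        (((Set.univ : Set V) ×ˢ ({0} : Set (Fin 3))) ∪ (Cᶜ ×ˢ ({1} : Set (Fin 3))))
      = ((Set.univ : Set V) ×ˢ ({0} : Set (Fin 3)))
        ∪ ((Set.univ : Set V) ×ˢ ({1} : Set (Fin 3)))
        ∪ ({v : V | ∃ u, G.Adj u v ∧ u ∉ C} ×ˢ ({2} : Set (Fin 3))))
    ∧ ((∀ u v, G.Adj u v → u ∈ C ∨ v ∈ C) →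
        {v : V | ∃ u, G.Adj u v ∧ u ∉ C} ⊆ C
        ∧ (spread (Gstar G)
            (((Set.univ : Set V) ×ˢ ({0} : Set (Fin 3)))
              ∪ (Cᶜ ×ˢ ({1} : Set (Fin 3))))).ncard
            ≤ 2 * Fintype.card V + C.ncard) :=
  ⟨Gstar.spread_screened G C, fun hC =>
    ⟨Gstar.neighborsOfCompl_subset fun u v => hC u v,
      Gstar.ncard_spread_screened_le fun u v => hC u v⟩⟩
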